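/- Let X be a compact metric space, G a group of homeomorphisms of X, and H a normal subgroup of G. The set of invertible elements of the monoid closure(G)/closure(H) (cosets closure(fH), f ∈ closure(G), with product closure(fH)*closure(pH) = closure(fpH)) forms a topological group in which inversion is continuous, and this group is completely metrizable via D'(closure(fH), closure(gH)) = D(closure(fH), closure(gH)) + D(closure(fH)⁻¹, closure(gH)⁻¹), where D is the Hausdorff metric. -/

import Mathlib

/-!
Closed cosets `closure (f H)` are treated as elements of `Closeds C(X, X)`, whose edistance is the
Hausdorff edistance `D`. Two estimates drive the argument. Right multiplication by an element of
the closure of the normalizer of `H` (which contains the closure of `G`) does not increase `D`: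
for `g` in the normalizer `(f g) H` is the right translate `(f H) g`, right composition is
1-Lipschitz for the uniform metric, and the estimate passes to limits of such `g`. Left
multiplication by a fixed `p` is uniformly continuous for `D`, because `p` is uniformly continuous
on the compact space `X`.

If `p f H` and `f' p' H` are trivial, then `p' H = p f p' H` and `p H = p f' p' H`, hence
`D(p' H, p H) ≤ D(p f H, p f' H)`, which is small once `D(f H, f' H)` is: inversion is continuous.
For completeness, a `D'`-Cauchy sequence of cosets converges in the complete space of closed sets
to some `A`. Every point of `closure (F n H)` has `closure (F n H)` as its closed coset, so for
`f ∈ A` the coset `closure (f H)` is at least as close to `closure (F n H)` as `A` is; thus the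
cosets converge to `closure (f H)`, and the relations `F n P n H = H` pass to the limit.
-/

open Filter Metric Topology TopologicalSpace
open scoped ENNReal

section HausdorffImage

variable {α β : Type*} [PseudoEMetricSpace α] [PseudoEMetricSpace β] {f : α → β}

theorem LipschitzWith.infEDist_image_le (hf : LipschitzWith 1 f) (x : α) (t : Set α) :
    infEDist (f x) (f '' t) ≤ infEDist x t :=
  le_iInf₂ fun y hy => (infEDist_le_edist_of_mem (Set.mem_image_of_mem f hy)).trans
    (by simpa using hf.edist_le_mul x y)

theorem LipschitzWith.hausdorffEDist_image_le (hf : LipschitzWith 1 f) (s t : Set α) :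
    hausdorffEDist (f '' s) (f '' t) ≤ hausdorffEDist s t := by
  refine hausdorffEDist_le_of_infEDist ?_ ?_
  · rintro _ ⟨x, hx, rfl⟩
    exact (hf.infEDist_image_le x t).trans (infEDist_le_hausdorffEDist_of_mem hx)
  · rintro _ ⟨x, hx, rfl⟩
    rw [hausdorffEDist_comm]
    exact (hf.infEDist_image_le x s).trans (infEDist_le_hausdorffEDist_of_mem hx)

theorem UniformContinuous.exists_pos_hausdorffEDist_image_lt (hf : UniformContinuous f)
    {ε : ℝ≥0∞} (hε : 0 < ε) :
    ∃ δ > 0, ∀ s t : Set α,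
      hausdorffEDist s t < δ → hausdorffEDist (f '' s) (f '' t) < ε :=
  letI := PseudoEMetricSpace.hausdorff (α := α)
  letI := PseudoEMetricSpace.hausdorff (α := β)
  EMetric.uniformContinuous_iff.1 hf.image_hausdorff ε hε

end HausdorffImage

theorem ContinuousMap.lipschitzWith_one_comp_left {α β γ : Type*} [TopologicalSpace α]
    [CompactSpace α] [TopologicalSpace β] [CompactSpace β] [PseudoMetricSpace γ]
    (g : C(α, β)) :
    LipschitzWith 1 (fun f : C(β, γ) => f.comp g) :=
  LipschitzWith.of_dist_le_mul fun u v => by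
    simpa using (ContinuousMap.dist_le dist_nonneg).2 fun x => dist_apply_le_dist (f := u) (g x)

section Coset

variable {X : Type*} [TopologicalSpace X]

def coset (H : Set (X ≃ₜ X)) (f : C(X, X)) : Set C(X, X) :=
  {q : C(X, X) | ∃ h ∈ H, q = f.comp (h : C(X, X))}

def closedCoset (H : Set (X ≃ₜ X)) (f : C(X, X)) : Closeds C(X, X) :=
  ⟨closure (coset H f), isClosed_closure⟩

def closureNormalizer (H : Subgroup (X ≃ₜ X)) : Set C(X, X) :=
  closure ((fun g : X ≃ₜ X => (g : C(X, X))) '' Subgroup.normalizer (H : Set (X ≃ₜ X)))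

theorem coset_comp_left (H : Set (X ≃ₜ X)) (p u : C(X, X)) :
    coset H (p.comp u) = p.comp '' coset H u := by
  ext q
  simp [coset, ContinuousMap.comp_assoc, eq_comm]

theorem mem_closedCoset_self (H : Subgroup (X ≃ₜ X)) (f : C(X, X)) :
    f ∈ closedCoset H f :=
  subset_closure ⟨1, H.one_mem, rfl⟩

theorem coset_comp_of_mem (H : Subgroup (X ≃ₜ X)) (u : C(X, X)) {h : X ≃ₜ X}
    (hh : h ∈ H) :
    coset H (u.comp (h : C(X, X))) = coset H u := by
  ext q
  constructor
  · rintro ⟨h', hh', rfl⟩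
    exact ⟨h * h', H.mul_mem hh hh', rfl⟩
  · rintro ⟨h', hh', rfl⟩
    refine ⟨h⁻¹ * h', H.mul_mem (H.inv_mem hh) hh', ?_⟩
    ext x
    simp

theorem closedCoset_comp_of_mem (H : Subgroup (X ≃ₜ X)) (u : C(X, X)) {h : X ≃ₜ X}
    (hh : h ∈ H) : closedCoset H (u.comp (h : C(X, X))) = closedCoset H u :=
  Closeds.ext (congrArg closure (coset_comp_of_mem H u hh))

theorem coset_comp_of_mem_normalizer (H : Subgroup (X ≃ₜ X)) (u : C(X, X)) {g : X ≃ₜ X}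
    (hg : g ∈ Subgroup.normalizer (H : Set (X ≃ₜ X))) :
    coset H (u.comp (g : C(X, X))) = (fun r : C(X, X) => r.comp (g : C(X, X))) '' coset H u := by
  ext q
  constructor
  · rintro ⟨h, hh, rfl⟩
    refine ⟨u.comp (g * h * g⁻¹ : X ≃ₜ X),
      ⟨_, (Subgroup.mem_normalizer_iff.1 hg h).1 hh, rfl⟩, ?_⟩
    ext x
    simp
  · rintro ⟨_, ⟨h, hh, rfl⟩, rfl⟩
    refine ⟨g⁻¹ * h * g, (Subgroup.mem_normalizer_iff''.1 hg h).1 hh, ?_⟩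
    ext x
    simp

theorem closure_subset_closureNormalizer {H : Subgroup (X ≃ₜ X)} {G : Set (X ≃ₜ X)}
    (hG : ∀ g ∈ G, g⁻¹ ∈ G) (hGH : ∀ g ∈ G, ∀ h ∈ H, g * h * g⁻¹ ∈ H) :
    closure ((fun g : X ≃ₜ X => (g : C(X, X))) '' G) ⊆ closureNormalizer H :=
  closure_mono <| Set.image_mono fun g hg => Subgroup.mem_normalizer_iff.2 fun h =>
    ⟨hGH g hg h, fun hh => by simpa [mul_assoc] using hGH g⁻¹ (hG g hg) _ hh⟩

theorem closedCoset_subset_closure {H G : Set (X ≃ₜ X)}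
    (hGH : ∀ g ∈ G, ∀ h ∈ H, g * h ∈ G)
    {f : C(X, X)} (hf : f ∈ closure ((fun g : X ≃ₜ X => (g : C(X, X))) '' G)) :
    (closedCoset H f : Set C(X, X)) ⊆ closure ((fun g : X ≃ₜ X => (g : C(X, X))) '' G) := by
  refine closure_minimal ?_ isClosed_closure
  rintro _ ⟨h, hh, rfl⟩
  refine map_mem_closure (f := fun u : C(X, X) => u.comp (h : C(X, X)))
    (ContinuousMap.continuous_precomp (h : C(X, X))) hf ?_
  rintro _ ⟨g, hg, rfl⟩
  exact ⟨g * h, hGH g hg h hh, rfl⟩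

end Coset

section ClosedCoset

variable {X : Type*} [MetricSpace X] [CompactSpace X]

theorem edist_closedCoset (H : Set (X ≃ₜ X)) (u v : C(X, X)) :
    edist (closedCoset H u) (closedCoset H v) = hausdorffEDist (coset H u) (coset H v) :=
  hausdorffEDist_closure

theorem lipschitzWith_closedCoset (H : Set (X ≃ₜ X)) : LipschitzWith 1 (closedCoset H) := by
  refine LipschitzWith.of_edist_le fun u v => ?_
  have hcomp (h : X ≃ₜ X) := ContinuousMap.lipschitzWith_one_comp_left (γ := X) (h : C(X, X))
  rw [edist_closedCoset]
  refine hausdorffEDist_le_of_mem_edist ?_ ?_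
  · rintro _ ⟨h, hh, rfl⟩
    exact ⟨v.comp h, ⟨h, hh, rfl⟩, by simpa using (hcomp h).edist_le_mul u v⟩
  · rintro _ ⟨h, hh, rfl⟩
    refine ⟨u.comp h, ⟨h, hh, rfl⟩, ?_⟩
    rw [edist_comm u v]
    simpa using (hcomp h).edist_le_mul v u

theorem exists_pos_edist_closedCoset_comp_lt (H : Set (X ≃ₜ X)) (p : C(X, X)) {ε : ℝ≥0∞}
    (hε : 0 < ε) :
    ∃ δ > 0, ∀ u v : C(X, X), edist (closedCoset H u) (closedCoset H v) < δ →
      edist (closedCoset H (p.comp u)) (closedCoset H (p.comp v)) < ε := by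
  have hp : UniformContinuous (fun u : C(X, X) => p.comp u) :=
    ContinuousMap.uniformContinuous_comp p
      (CompactSpace.uniformContinuous_of_continuous p.continuous)
  obtain ⟨δ, hδ, hpδ⟩ := hp.exists_pos_hausdorffEDist_image_lt hε
  refine ⟨δ, hδ, fun u v huv => ?_⟩
  rw [edist_closedCoset, coset_comp_left, coset_comp_left]
  exact hpδ _ _ (by rwa [← edist_closedCoset])

theorem closedCoset_comp_congr_left (H : Set (X ≃ₜ X)) (p : C(X, X)) {u v : C(X, X)}
    (huv : closedCoset H u = closedCoset H v) :
    closedCoset H (p.comp u) = closedCoset H (p.comp v) := by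
  refine edist_le_zero.1 (le_of_forall_gt fun ε hε => ?_)
  obtain ⟨δ, hδ, hpδ⟩ := exists_pos_edist_closedCoset_comp_lt H p hε
  exact hpδ u v (by rwa [huv, edist_self])

theorem edist_closedCoset_comp_right_le (H : Subgroup (X ≃ₜ X)) (u v : C(X, X)) {q : C(X, X)}
    (hq : q ∈ closureNormalizer H) :
    edist (closedCoset H (u.comp q)) (closedCoset H (v.comp q)) ≤
      edist (closedCoset H u) (closedCoset H v) := by
  have hcont : ∀ w : C(X, X), Continuous fun q : C(X, X) => closedCoset H (w.comp q) :=
    fun w => (lipschitzWith_closedCoset (H : Set (X ≃ₜ X))).continuous.comp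
      (ContinuousMap.continuous_postcomp w)
  refine closure_minimal ?_ (isClosed_le ((hcont u).edist (hcont v)) continuous_const) hq
  rintro _ ⟨g, hg, rfl⟩
  simp only [Set.mem_ofPred_eq, edist_closedCoset, coset_comp_of_mem_normalizer H _ hg]
  exact (ContinuousMap.lipschitzWith_one_comp_left (g : C(X, X))).hausdorffEDist_image_le _ _

theorem closedCoset_comp_congr_right (H : Subgroup (X ≃ₜ X)) {u v q : C(X, X)}
    (huv : closedCoset H u = closedCoset H v)
    (hq : q ∈ closureNormalizer H) :
    closedCoset H (u.comp q) = closedCoset H (v.comp q) :=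
  edist_le_zero.1 ((edist_closedCoset_comp_right_le H u v hq).trans_eq (by rw [huv, edist_self]))

theorem edist_closedCoset_le_of_mem (H : Subgroup (X ≃ₜ X)) (u : C(X, X)) {A : Closeds C(X, X)}
    {f : C(X, X)} (hf : f ∈ A) :
    edist (closedCoset H u) (closedCoset H f) ≤ edist (closedCoset H u) A := by
  have hcoset : edist (closedCoset H f) (closedCoset H u) ≤ infEDist f (coset H u) := by
    refine le_iInf₂ fun _ ⟨h, hh, ha⟩ => ?_
    rw [ha, ← closedCoset_comp_of_mem H u hh]
    simpa using (lipschitzWith_closedCoset (H : Set (X ≃ₜ X))).edist_le_mul f _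
  rw [edist_comm, edist_comm _ A]
  calc edist (closedCoset H f) (closedCoset H u) ≤ infEDist f (coset H u) := hcoset
    _ = infEDist f (closedCoset H u) := infEDist_closure.symm
    _ ≤ edist A (closedCoset H u) := infEDist_le_hausdorffEDist_of_mem hf

theorem exists_tendsto_closedCoset_of_cauchySeq (H : Subgroup (X ≃ₜ X)) {S : Set C(X, X)}
    (hS : IsClosed S) {F : ℕ → C(X, X)} (hFS : ∀ n, (closedCoset H (F n) : Set C(X, X)) ⊆ S)
    (hF : CauchySeq fun n => closedCoset H (F n)) :
    ∃ f ∈ S, Tendsto (fun n => closedCoset H (F n)) atTop (𝓝 (closedCoset H f)) := by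
  obtain ⟨A, hA⟩ := cauchySeq_tendsto_of_complete hF
  have hAS : (A : Set C(X, X)) ⊆ S :=
    (Closeds.isClosed_subsets_of_isClosed hS).mem_of_tendsto hA (Eventually.of_forall hFS)
  obtain ⟨N, hN⟩ := ((EMetric.tendsto_nhds.1 hA) 1 one_pos).exists
  obtain ⟨f, hf⟩ : (A : Set C(X, X)).Nonempty :=
    nonempty_of_hausdorffEDist_ne_top ⟨F N, mem_closedCoset_self H (F N)⟩ hN.ne_top
  refine ⟨f, hAS hf, tendsto_iff_edist_tendsto_0.2 ?_⟩
  exact tendsto_of_tendsto_of_tendsto_of_le_of_le tendsto_const_nhds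
    (tendsto_iff_edist_tendsto_0.1 hA) (fun _ => zero_le)
    (fun n => edist_closedCoset_le_of_mem H (F n) hf)

theorem tendsto_closedCoset_comp (H : Subgroup (X ≃ₜ X)) {ι : Type*} {l : Filter ι}
    {F P : ι → C(X, X)} {f p : C(X, X)}
    (hF : Tendsto (fun n => closedCoset H (F n)) l (𝓝 (closedCoset H f)))
    (hP : Tendsto (fun n => closedCoset H (P n)) l (𝓝 (closedCoset H p)))
    (hPN : ∀ n, P n ∈ closureNormalizer H) :
    Tendsto (fun n => closedCoset H ((F n).comp (P n))) l (𝓝 (closedCoset H (f.comp p))) := by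
  refine EMetric.tendsto_nhds.2 fun ε hε => ?_
  obtain ⟨δ, hδ, hfδ⟩ := exists_pos_edist_closedCoset_comp_lt H f (ENNReal.half_pos hε.ne')
  filter_upwards [EMetric.tendsto_nhds.1 hF _ (ENNReal.half_pos hε.ne'),
    EMetric.tendsto_nhds.1 hP δ hδ] with n hFn hPn
  calc edist (closedCoset H ((F n).comp (P n))) (closedCoset H (f.comp p))
      ≤ edist (closedCoset H ((F n).comp (P n))) (closedCoset H (f.comp (P n))) +
        edist (closedCoset H (f.comp (P n))) (closedCoset H (f.comp p)) := edist_triangle _ _ _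
    _ < ε / 2 + ε / 2 :=
        ENNReal.add_lt_add ((edist_closedCoset_comp_right_le H _ _ (hPN n)).trans_lt hFn)
          (hfδ _ _ hPn)
    _ = ε := ENNReal.add_halves ε

theorem edist_closedCoset_inv_le (H : Subgroup (X ≃ₜ X)) {f p f' p' : C(X, X)}
    (hp' : p' ∈ closureNormalizer H)
    (hpf : closedCoset H (p.comp f) = closedCoset H (ContinuousMap.id X))
    (hfp' : closedCoset H (f'.comp p') = closedCoset H (ContinuousMap.id X)) :
    edist (closedCoset H p') (closedCoset H p) ≤
      edist (closedCoset H (p.comp f)) (closedCoset H (p.comp f')) := by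
  have hp'_eq : closedCoset H p' = closedCoset H ((p.comp f).comp p') := by
    simpa using closedCoset_comp_congr_right H hpf.symm hp'
  have hp_eq : closedCoset H p = closedCoset H ((p.comp f').comp p') := by
    simpa [ContinuousMap.comp_assoc] using closedCoset_comp_congr_left H p hfp'.symm
  rw [hp'_eq, hp_eq]
  exact edist_closedCoset_comp_right_le H _ _ hp'

def IsInverseCosetPair (H : Set (X ≃ₜ X)) (S : Set C(X, X)) (f p : C(X, X)) : Prop :=
  f ∈ S ∧ p ∈ S ∧ closedCoset H (f.comp p) = closedCoset H (ContinuousMap.id X) ∧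
    closedCoset H (p.comp f) = closedCoset H (ContinuousMap.id X)

theorem IsInverseCosetPair.exists_pos_edist_lt (H : Subgroup (X ≃ₜ X)) {S : Set C(X, X)}
    (hSN : S ⊆ closureNormalizer H) {f p : C(X, X)} (hfp : IsInverseCosetPair H S f p)
    {ε : ℝ≥0∞} (hε : 0 < ε) :
    ∃ δ > 0, ∀ f' p' : C(X, X), IsInverseCosetPair H S f' p' →
      edist (closedCoset H f') (closedCoset H f) < δ →
      edist (closedCoset H p') (closedCoset H p) < ε := by
  obtain ⟨δ, hδ, hpδ⟩ := exists_pos_edist_closedCoset_comp_lt H p hε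
  refine ⟨δ, hδ, fun f' p' hfp' hff' => ?_⟩
  exact (edist_closedCoset_inv_le H (hSN hfp'.2.1) hfp.2.2.2 hfp'.2.2.1).trans_lt
    (hpδ f f' (by rwa [edist_comm]))

theorem exists_isInverseCosetPair_tendsto (H : Subgroup (X ≃ₜ X)) {S : Set C(X, X)}
    (hS : IsClosed S) (hSN : S ⊆ closureNormalizer H)
    (hSH : ∀ u ∈ S, (closedCoset H u : Set C(X, X)) ⊆ S) {F P : ℕ → C(X, X)}
    (hFP : ∀ n, IsInverseCosetPair H S (F n) (P n))
    (hF : CauchySeq fun n => closedCoset H (F n)) (hP : CauchySeq fun n => closedCoset H (P n)) :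
    ∃ f p : C(X, X), IsInverseCosetPair H S f p ∧
      Tendsto (fun n => closedCoset H (F n)) atTop (𝓝 (closedCoset H f)) ∧
      Tendsto (fun n => closedCoset H (P n)) atTop (𝓝 (closedCoset H p)) := by
  obtain ⟨f, hfS, hFf⟩ :=
    exists_tendsto_closedCoset_of_cauchySeq H hS (fun n => hSH _ (hFP n).1) hF
  obtain ⟨p, hpS, hPp⟩ :=
    exists_tendsto_closedCoset_of_cauchySeq H hS (fun n => hSH _ (hFP n).2.1) hP
  refine ⟨f, p, ⟨hfS, hpS, ?_, ?_⟩, hFf, hPp⟩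
  · exact tendsto_nhds_unique (tendsto_closedCoset_comp H hFf hPp fun n => hSN (hFP n).2.1)
      (tendsto_const_nhds.congr fun n => (hFP n).2.2.1.symm)
  · exact tendsto_nhds_unique (tendsto_closedCoset_comp H hPp hFf fun n => hSN (hFP n).1)
      (tendsto_const_nhds.congr fun n => (hFP n).2.2.2.symm)

end ClosedCoset

theorem cauchySeq_and_cauchySeq_of_edist_add_lt {α β : Type*} [PseudoEMetricSpace α]
    [PseudoEMetricSpace β] {u : ℕ → α} {v : ℕ → β}
    (h : ∀ ε : ℝ, 0 < ε → ∃ N : ℕ, ∀ a ≥ N, ∀ b ≥ N,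
      edist (u a) (u b) + edist (v a) (v b) < ENNReal.ofReal ε) :
    CauchySeq u ∧ CauchySeq v := by
  have hsmall : ∀ ε : NNReal, 0 < ε → ∃ N, ∀ n ≥ N,
      edist (u n) (u N) + edist (v n) (v N) < ε := fun ε hε => by
    obtain ⟨N, hN⟩ := h ε (NNReal.coe_pos.2 hε)
    refine ⟨N, fun n hn => ?_⟩
    simpa using hN n hn N le_rfl
  exact ⟨EMetric.cauchySeq_iff_NNReal.2 fun ε hε =>
      (hsmall ε hε).imp fun N hN n hn => le_self_add.trans_lt (hN n hn),
    EMetric.cauchySeq_iff_NNReal.2 fun ε hε =>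
      (hsmall ε hε).imp fun N hN n hn => le_add_self.trans_lt (hN n hn)⟩

open EMetric in
theorem stmt10_general {X : Type*} [MetricSpace X] [CompactSpace X]
    (G H : Set (X ≃ₜ X))
    (hG2 : ∀ f ∈ G, ∀ g ∈ G, f.trans g ∈ G)
    (hG3 : ∀ f ∈ G, f.symm ∈ G) (hHG : H ⊆ G)
    (hH1 : Homeomorph.refl X ∈ H) (hH2 : ∀ f ∈ H, ∀ g ∈ H, f.trans g ∈ H)
    (hH3 : ∀ f ∈ H, f.symm ∈ H)
    (hnorm : ∀ g ∈ G, ∀ h ∈ H, (g.symm.trans h).trans g ∈ H) :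
    let m : C(X, X) → Set C(X, X) :=
      fun f => closure {q : C(X, X) | ∃ h ∈ H, q = f.comp (h : C(X, X))}
    let Gbar : Set C(X, X) := closure {q : C(X, X) | ∃ g ∈ G, q = (g : C(X, X))}
    -- `f, p` represent mutually inverse cosets
    let InvPair : C(X, X) → C(X, X) → Prop := fun f p =>
      f ∈ Gbar ∧ p ∈ Gbar ∧ m (f.comp p) = m (ContinuousMap.id X) ∧
        m (p.comp f) = m (ContinuousMap.id X)
    -- inversion is continuous on the group of invertible cosets
    (∀ f p : C(X, X), InvPair f p → ∀ ε : ℝ, 0 < ε → ∃ δ : ℝ, 0 < δ ∧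
      ∀ f' p' : C(X, X), InvPair f' p' →
        hausdorffEdist (m f') (m f) < ENNReal.ofReal δ →
        hausdorffEdist (m p') (m p) < ENNReal.ofReal ε) ∧
    -- completeness of the metric `D'`: any sequence of invertible cosets that is
    -- Cauchy for `D'` converges to an invertible coset
    (∀ F P : ℕ → C(X, X), (∀ n, InvPair (F n) (P n)) →
      (∀ ε : ℝ, 0 < ε → ∃ N : ℕ, ∀ a ≥ N, ∀ b ≥ N,
        hausdorffEdist (m (F a)) (m (F b)) +
          hausdorffEdist (m (P a)) (m (P b)) < ENNReal.ofReal ε) →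
      ∃ f p : C(X, X), InvPair f p ∧
        Filter.Tendsto (fun n =>
          hausdorffEdist (m (F n)) (m f) + hausdorffEdist (m (P n)) (m p))
          Filter.atTop (nhds 0)) := by
  intro m Gbar InvPair
  let H' : Subgroup (X ≃ₜ X) :=
    { carrier := H, mul_mem' := fun ha hb => hH2 _ hb _ ha, one_mem' := hH1,
      inv_mem' := fun hh => hH3 _ hh }
  have hGbar : Gbar = closure ((fun g : X ≃ₜ X => (g : C(X, X))) '' G) := by
    simp only [Gbar, Set.image, eq_comm]
  have hGN : Gbar ⊆ closureNormalizer H' :=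
    hGbar ▸ closure_subset_closureNormalizer hG3 hnorm
  have hGH : ∀ u ∈ Gbar, (closedCoset H u : Set C(X, X)) ⊆ Gbar := fun u hu => by
    rw [hGbar] at hu ⊢
    exact closedCoset_subset_closure (fun g hg h hh => hG2 h (hHG hh) g hg) hu
  have hInv : ∀ f p, InvPair f p ↔ IsInverseCosetPair H Gbar f p := fun f p => by
    simp only [IsInverseCosetPair, ← SetLike.coe_set_eq]
    rfl
  refine ⟨fun f p hfp ε hε => ?_, fun F P hFP hcau => ?_⟩
  · obtain ⟨δ, hδ, hδε⟩ :=
      ((hInv f p).1 hfp).exists_pos_edist_lt H' hGN (ENNReal.ofReal_pos.2 hε)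
    obtain ⟨δ', -, hδ'pos, hδ'δ⟩ := ENNReal.lt_iff_exists_real_btwn.1 hδ
    exact ⟨δ', ENNReal.ofReal_pos.1 hδ'pos, fun f' p' hfp' hff' =>
      hδε f' p' ((hInv f' p').1 hfp') (hff'.trans hδ'δ)⟩
  · obtain ⟨hF, hP⟩ := cauchySeq_and_cauchySeq_of_edist_add_lt
      (u := fun n => closedCoset H (F n)) (v := fun n => closedCoset H (P n)) hcau
    obtain ⟨f, p, hfp, hFf, hPp⟩ := exists_isInverseCosetPair_tendsto H' isClosed_closure hGN
      hGH (fun n => (hInv _ _).1 (hFP n)) hF hP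
    have hsum := (tendsto_iff_edist_tendsto_0.1 hFf).add (tendsto_iff_edist_tendsto_0.1 hPp)
    rw [add_zero] at hsum
    exact ⟨f, p, (hInv f p).2 hfp, hsum⟩

open EMetric in
/-- With `X` compact metric, `G` a group of homeomorphisms of `X`,
`H ⊴ G`, consider the monoid of cosets `closure(fH)`, `f ∈ closure(G)`, with
Hausdorff metric `D`.  On its group of invertible elements inversion is continuous,
and the metric `D'(closure(fH),closure(gH)) = D(closure(fH),closure(gH)) +
D(closure(fH)⁻¹,closure(gH)⁻¹)` is complete, so this group is a completely
metrizable topological group. -/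
theorem stmt10 {X : Type*} [MetricSpace X] [CompactSpace X]
    (G H : Set (X ≃ₜ X))
    (hG1 : Homeomorph.refl X ∈ G) (hG2 : ∀ f ∈ G, ∀ g ∈ G, f.trans g ∈ G)
    (hG3 : ∀ f ∈ G, f.symm ∈ G) (hHG : H ⊆ G)
    (hH1 : Homeomorph.refl X ∈ H) (hH2 : ∀ f ∈ H, ∀ g ∈ H, f.trans g ∈ H)
    (hH3 : ∀ f ∈ H, f.symm ∈ H)
    (hnorm : ∀ g ∈ G, ∀ h ∈ H, (g.symm.trans h).trans g ∈ H) :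
    let m : C(X, X) → Set C(X, X) :=
      fun f => closure {q : C(X, X) | ∃ h ∈ H, q = f.comp (h : C(X, X))}
    let Gbar : Set C(X, X) := closure {q : C(X, X) | ∃ g ∈ G, q = (g : C(X, X))}
    -- `f, p` represent mutually inverse cosets
    let InvPair : C(X, X) → C(X, X) → Prop := fun f p =>
      f ∈ Gbar ∧ p ∈ Gbar ∧ m (f.comp p) = m (ContinuousMap.id X) ∧
        m (p.comp f) = m (ContinuousMap.id X)
    -- inversion is continuous on the group of invertible cosets
    (∀ f p : C(X, X), InvPair f p → ∀ ε : ℝ, 0 < ε → ∃ δ : ℝ, 0 < δ ∧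
      ∀ f' p' : C(X, X), InvPair f' p' →
        hausdorffEdist (m f') (m f) < ENNReal.ofReal δ →
        hausdorffEdist (m p') (m p) < ENNReal.ofReal ε) ∧
    -- completeness of the metric `D'`: any sequence of invertible cosets that is
    -- Cauchy for `D'` converges to an invertible coset
    (∀ F P : ℕ → C(X, X), (∀ n, InvPair (F n) (P n)) →
      (∀ ε : ℝ, 0 < ε → ∃ N : ℕ, ∀ a ≥ N, ∀ b ≥ N,
        hausdorffEdist (m (F a)) (m (F b)) +
          hausdorffEdist (m (P a)) (m (P b)) < ENNReal.ofReal ε) →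
      ∃ f p : C(X, X), InvPair f p ∧
        Filter.Tendsto (fun n =>
          hausdorffEdist (m (F n)) (m f) + hausdorffEdist (m (P n)) (m p))
          Filter.atTop (nhds 0)) :=
  stmt10_general G H hG2 hG3 hHG hH1 hH2 hH3 hnorm
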